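/- arXiv:2401.13277 — 4 statements merged into one kernel-verified Lean document; each statement's English description precedes it below -/
import Mathlib

section
/- The system of equations in six rational unknowns (a₁₂, a₁₃, a₁₄, a₂₃, a₂₄, a₃₄): a₁₃ + a₂₄ = −1, a₁₄ + a₂₃ = 0, a₁₂ − a₁₃ − a₁₄ − a₂₄ = 0, a₁₂ − a₁₃ + 2a₁₄ + a₂₃ + a₂₄ = 0, 2a₁₂ − 3a₁₃ + a₁₄ + a₂₃ + 3a₂₄ + a₃₄ = 0, together with the quadratic equation a₁₄a₂₃ − a₁₃a₂₄ + a₁₂a₃₄ = 0, has no solution in rational numbers. -/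
theorem elliptic_criterion_system_no_rational_solution :
    ¬ ∃ a12 a13 a14 a23 a24 a34 : ℚ,
      a13 + a24 = -1 ∧
      a14 + a23 = 0 ∧
      a12 - a13 - a14 - a24 = 0 ∧
      a12 - a13 + 2 * a14 + a23 + a24 = 0 ∧
      2 * a12 - 3 * a13 + a14 + a23 + 3 * a24 + a34 = 0 ∧
      a14 * a23 - a13 * a24 + a12 * a34 = 0 := by
  rintro ⟨a12, a13, a14, a23, a24, a34, h1, h2, h3, h4, h5, h6⟩
  -- solve the linear part in terms of t = a14
  have e23 : a23 = -a14 := by linarith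
  have e24 : a24 = -a14 := by linarith
  have e13 : a13 = -1 + a14 := by linarith
  have e12 : a12 = -1 + a14 := by linarith
  have e34 : a34 = -1 + 4 * a14 := by linarith
  subst e23 e24 e13 e12 e34
  have hq : (4 * a14 - 3) ^ 2 = 5 := by nlinarith [h6]
  have h5i : Irrational (Real.sqrt 5) := by
    simpa using (Nat.prime_five).irrational_sqrt
  have : ((4 * a14 - 3 : ℚ) : ℝ) ^ 2 = 5 := by exact_mod_cast hq
  have habs : Real.sqrt 5 = |((4 * a14 - 3 : ℚ) : ℝ)| := by
    rw [← this, Real.sqrt_sq_eq_abs]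
  exact h5i ⟨|4 * a14 - 3|, by push_cast [habs]; simp⟩
end

section
/- Let ζ = exp(2πi/5) and let Z₁ be the 2×2 complex matrix with entries Z₁(1,1) = −8ζ³ + 4ζ² − 4ζ − 2, Z₁(1,2) = Z₁(2,1) = −4ζ³ − 4ζ² − 6, Z₁(2,2) = 4ζ³ + 4ζ + 2. Then Z₁ is symmetric and its imaginary part is a positive definite real matrix; i.e., Z₁ lies in the Siegel upper half-space ℋ₂. -/
open Complex in
theorem Z1_in_Siegel_upper_half_space :
    let ζ : ℂ := Complex.exp (2 * Real.pi * Complex.I / 5)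
    let Z1 : Matrix (Fin 2) (Fin 2) ℂ :=
      !![-8 * ζ ^ 3 + 4 * ζ ^ 2 - 4 * ζ - 2, -4 * ζ ^ 3 - 4 * ζ ^ 2 - 6;
         -4 * ζ ^ 3 - 4 * ζ ^ 2 - 6, 4 * ζ ^ 3 + 4 * ζ + 2]
    Z1.IsSymm ∧ (Z1.map Complex.im).PosDef := by
  intro ζ Z1
  have hsin5 : (0:ℝ) < Real.sin (Real.pi / 5) :=
    Real.sin_pos_of_pos_of_lt_pi (by positivity)
      (by linarith [Real.pi_pos])
  have hcos5 : Real.cos (Real.pi / 5) = (1 + Real.sqrt 5) / 4 := Real.cos_pi_div_five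
  have hsqrt5_lt : Real.sqrt 5 < 3 := by
    nlinarith [Real.sq_sqrt (by norm_num : (5:ℝ) ≥ 0), Real.sqrt_nonneg 5]
  have hsqrt5_gt : (1:ℝ) < Real.sqrt 5 := by
    nlinarith [Real.sq_sqrt (by norm_num : (5:ℝ) ≥ 0), Real.sqrt_nonneg 5]
  -- imaginary parts of powers of ζ
  have him1 : ζ.im = Real.sin (2 * Real.pi / 5) := by
    simp [ζ, Complex.exp_im, Complex.div_im, Complex.div_re]
  have him2 : (ζ ^ 2).im = Real.sin (Real.pi / 5) := by
    rw [show ζ ^ 2 = Complex.exp (2 * (2 * Real.pi * Complex.I / 5)) by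
      rw [← Complex.exp_nat_mul]; norm_num]
    simp [Complex.exp_im, Complex.div_im, Complex.div_re]
    rw [show 2 * (2 * Real.pi / 5) = Real.pi - Real.pi / 5 by ring, Real.sin_pi_sub]
  have him3 : (ζ ^ 3).im = -Real.sin (Real.pi / 5) := by
    rw [show ζ ^ 3 = Complex.exp (3 * (2 * Real.pi * Complex.I / 5)) by
      rw [← Complex.exp_nat_mul]; norm_num]
    simp [Complex.exp_im, Complex.div_im, Complex.div_re]
    rw [show 3 * (2 * Real.pi / 5) = Real.pi / 5 + Real.pi by ring, Real.sin_add_pi]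
  have hsin2 : Real.sin (2 * Real.pi / 5) = 2 * Real.sin (Real.pi / 5) * Real.cos (Real.pi / 5) := by
    rw [show 2 * Real.pi / 5 = 2 * (Real.pi / 5) by ring, Real.sin_two_mul]
  constructor
  · show Matrix.transpose Z1 = Z1
    ext i j
    fin_cases i <;> fin_cases j <;> simp [Z1]
  · have hdiag : Z1.map Complex.im =
        Matrix.diagonal ![12 * Real.sin (Real.pi / 5) - 4 * Real.sin (2 * Real.pi / 5),
          4 * Real.sin (2 * Real.pi / 5) - 4 * Real.sin (Real.pi / 5)] := by
      ext i j
      fin_cases i <;> fin_cases j <;>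
        simp [Z1, Matrix.diagonal, him1, him2, him3] <;> ring
    rw [hdiag]
    refine Matrix.PosDef.diagonal ?_
    intro i
    fin_cases i <;> simp <;> rw [hsin2] <;> rw [hcos5] <;> nlinarith [hsin5]
end

section
/- For every integer g ≥ 2 there exists a group of order 8(g+1) generated by elements a, b, c satisfying a^{2g+2} = b² = c² = 1, ab = ba, bc = cb, and cacab = 1, in which a has order exactly 2g+2. -/
/-!
With n = 2g + 2, let c act on N = ℤ/n × ℤ/2 by the involution (x, y) ↦ (-x, (x mod 2) + y),
and put a = (1, 0), b = (0, 1). Then c a c = (-1, 1) = a⁻¹ b and c b c = b, which give the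
required relations, and N ⋊ ℤ/2 has order 4n = 8(g + 1) and is generated by a, b, c.
-/

open Multiplicative SemidirectProduct

lemma SemidirectProduct.closure_image_inl_union_image_inr {N G : Type*} [Group N] [Group G]
    {φ : G →* MulAut N} {S : Set N} {T : Set G} (hS : Subgroup.closure S = ⊤)
    (hT : Subgroup.closure T = ⊤) :
    Subgroup.closure (inl '' S ∪ inr '' T : Set (N ⋊[φ] G)) = ⊤ := by
  have hN : (inl : N →* N ⋊[φ] G).range ≤ Subgroup.closure (inl '' S ∪ inr '' T) := by
    rw [MonoidHom.range_eq_map, ← hS, MonoidHom.map_closure]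
    exact Subgroup.closure_mono Set.subset_union_left
  have hG : (inr : G →* N ⋊[φ] G).range ≤ Subgroup.closure (inl '' S ∪ inr '' T) := by
    rw [MonoidHom.range_eq_map, ← hT, MonoidHom.map_closure]
    exact Subgroup.closure_mono Set.subset_union_right
  exact Subgroup.eq_top_iff' _ |>.2 fun x =>
    inl_left_mul_inr_right x ▸ mul_mem (hN ⟨_, rfl⟩) (hG ⟨_, rfl⟩)

lemma ZMod.closure_ofAdd_one (m : ℕ) : Subgroup.closure {ofAdd (1 : ZMod m)} = ⊤ :=
  Subgroup.eq_top_iff' _ |>.2 fun x => by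
    simpa [← ofAdd_zsmul] using
      Subgroup.zpow_mem (Subgroup.closure {ofAdd (1 : ZMod m)})
        (Subgroup.subset_closure (Set.mem_singleton _)) ((toAdd x).cast : ℤ)

lemma ZMod.closure_ofAdd_prod_basis (m k : ℕ) :
    Subgroup.closure {ofAdd ((1, 0) : ZMod m × ZMod k), ofAdd (0, 1)} = ⊤ :=
  Subgroup.eq_top_iff' _ |>.2 fun x => by
    have hx : x = ofAdd ((1, 0) : ZMod m × ZMod k) ^ (x.toAdd.1.cast : ℤ) *
        ofAdd ((0, 1) : ZMod m × ZMod k) ^ (x.toAdd.2.cast : ℤ) := by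
      simp [← ofAdd_zsmul, ← ofAdd_add]
    rw [hx]
    exact mul_mem (Subgroup.zpow_mem _ (Subgroup.subset_closure (by simp)) _)
      (Subgroup.zpow_mem _ (Subgroup.subset_closure (by simp)) _)

def involutionHom {H : Type*} [Group H] (h : H) (hh : h ^ 2 = 1) : Multiplicative (ZMod 2) →* H :=
  AddMonoidHom.toMultiplicativeLeft <| ZMod.lift 2
    ⟨zmultiplesHom _ (Additive.ofMul h), by
      rw [zmultiplesHom_apply, natCast_zsmul, ← ofMul_pow, hh, ofMul_one]⟩

@[simp]
lemma involutionHom_ofAdd_one {H : Type*} [Group H] (h : H) (hh : h ^ 2 = 1) :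
    involutionHom h hh (ofAdd 1) = h := by
  simpa [involutionHom] using
    congrArg Additive.toMul (ZMod.lift_coe 2 ⟨zmultiplesHom _ (Additive.ofMul h), _⟩ 1)

section NegShear

variable {A B : Type*} [AddCommGroup A] [AddCommGroup B] (f : A →+ B)

def negShear : A × B ≃+ A × B where
  toFun p := (-p.1, f p.1 + p.2)
  invFun p := (-p.1, f p.1 + p.2)
  left_inv p := by simp
  right_inv p := by simp
  map_add' p q := by ext <;> simp only [Prod.fst_add, Prod.snd_add, neg_add, map_add]; abel

@[simp]
lemma negShear_apply (p : A × B) : negShear f p = (-p.1, f p.1 + p.2) := rfl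

def negShearAction : Multiplicative (ZMod 2) →* MulAut (Multiplicative (A × B)) :=
  involutionHom (AddEquiv.toMultiplicative (negShear f)) <| by
    rw [pow_two]
    exact MulEquiv.ext fun p => (negShear f).left_inv p.toAdd

lemma inr_mul_inl_mul_inr_negShearAction (p : A × B) :
    (inr (ofAdd 1) * inl (ofAdd p) * inr (ofAdd 1) :
      Multiplicative (A × B) ⋊[negShearAction f] Multiplicative (ZMod 2)) =
      inl (ofAdd (negShear f p)) := by
  have hinv : (ofAdd 1 : Multiplicative (ZMod 2))⁻¹ = ofAdd 1 := rfl
  simpa [hinv, negShearAction] using (inl_aut (φ := negShearAction f) (ofAdd 1) (ofAdd p)).symm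

end NegShear

abbrev AccolaMaclachlanGroup (n : ℕ) (hn : 2 ∣ n) :=
  Multiplicative (ZMod n × ZMod 2) ⋊[negShearAction (ZMod.castHom hn (ZMod 2)).toAddMonoidHom]
    Multiplicative (ZMod 2)

namespace AccolaMaclachlanGroup

variable (n : ℕ) (hn : 2 ∣ n)

def a : AccolaMaclachlanGroup n hn := inl (ofAdd (1, 0))
def b : AccolaMaclachlanGroup n hn := inl (ofAdd (0, 1))
def c : AccolaMaclachlanGroup n hn := inr (ofAdd 1)

lemma card : Nat.card (AccolaMaclachlanGroup n hn) = 4 * n := by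
  rw [SemidirectProduct.card, Nat.card_congr toAdd, Nat.card_congr toAdd, Nat.card_prod,
    Nat.card_zmod, Nat.card_zmod]
  ring

lemma closure_abc : Subgroup.closure {a n hn, b n hn, c n hn} = ⊤ := by
  convert closure_image_inl_union_image_inr
    (φ := negShearAction (ZMod.castHom hn (ZMod 2)).toAddMonoidHom)
    (ZMod.closure_ofAdd_prod_basis n 2) (ZMod.closure_ofAdd_one 2) using 2
  simp only [Set.image_insert_eq, Set.image_singleton, Set.insert_union, Set.singleton_union]
  rfl

lemma orderOf_a : orderOf (a n hn) = n := by
  rw [a, orderOf_injective _ inl_injective, orderOf_ofAdd_eq_addOrderOf, Prod.addOrderOf_mk,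
    ZMod.addOrderOf_one, addOrderOf_zero, Nat.lcm_one_right]

lemma orderOf_b : orderOf (b n hn) = 2 := by
  rw [b, orderOf_injective _ inl_injective, orderOf_ofAdd_eq_addOrderOf, Prod.addOrderOf_mk,
    ZMod.addOrderOf_one, addOrderOf_zero, Nat.lcm_one_left]

lemma orderOf_c : orderOf (c n hn) = 2 := by
  rw [c, orderOf_injective _ inr_injective, orderOf_ofAdd_eq_addOrderOf, ZMod.addOrderOf_one]

lemma a_mul_b_comm : a n hn * b n hn = b n hn * a n hn := by
  simp only [a, b, ← map_mul, ← ofAdd_add, add_comm]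

lemma c_mul_b_mul_c : c n hn * b n hn * c n hn = b n hn :=
  (inr_mul_inl_mul_inr_negShearAction _ _).trans (by simp [b])

lemma b_mul_c_comm : b n hn * c n hn = c n hn * b n hn := by
  have hc : c n hn * c n hn = 1 := by
    rw [← pow_two, ← orderOf_dvd_iff_pow_eq_one, orderOf_c]
  calc b n hn * c n hn = c n hn * b n hn * c n hn * c n hn := by rw [c_mul_b_mul_c]
    _ = c n hn * b n hn := by rw [mul_assoc, hc, mul_one]

lemma c_mul_a_mul_c_mul_a_mul_b : c n hn * a n hn * c n hn * a n hn * b n hn = 1 := by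
  have hsum : negShear (ZMod.castHom hn (ZMod 2)).toAddMonoidHom (1, 0) + (1, 0) + (0, 1) = 0 := by
    ext
    · simp
    · show ZMod.castHom hn (ZMod 2) 1 + 0 + 0 + 1 = 0
      rw [map_one]
      rfl
  rw [c, a, b, inr_mul_inl_mul_inr_negShearAction, ← map_mul, ← map_mul, ← ofAdd_add,
    ← ofAdd_add, hsum, ofAdd_zero, map_one]

end AccolaMaclachlanGroup

theorem accola_maclachlan_group_exists_general (g : ℕ) :
    ∃ (G : Type) (_ : Group G) (a b c : G),
      Nat.card G = 8 * (g + 1) ∧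
      Subgroup.closure {a, b, c} = (⊤ : Subgroup G) ∧
      a ^ (2 * g + 2) = 1 ∧ b ^ 2 = 1 ∧ c ^ 2 = 1 ∧
      a * b = b * a ∧ b * c = c * b ∧ c * a * c * a * b = 1 ∧
      orderOf a = 2 * g + 2 := by
  have hn : 2 ∣ 2 * g + 2 := ⟨g + 1, by ring⟩
  open AccolaMaclachlanGroup in
  exact ⟨AccolaMaclachlanGroup _ hn, inferInstance, a _ hn, b _ hn, c _ hn,
    by rw [card]; ring, closure_abc _ hn,
    orderOf_dvd_iff_pow_eq_one.1 (orderOf_a _ hn).dvd,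
    orderOf_dvd_iff_pow_eq_one.1 (orderOf_b _ hn).dvd,
    orderOf_dvd_iff_pow_eq_one.1 (orderOf_c _ hn).dvd,
    a_mul_b_comm _ hn, b_mul_c_comm _ hn, c_mul_a_mul_c_mul_a_mul_b _ hn, orderOf_a _ hn⟩

theorem accola_maclachlan_group_exists (g : ℕ) (hg : 2 ≤ g) :
    ∃ (G : Type) (_ : Group G) (a b c : G),
      Nat.card G = 8 * (g + 1) ∧
      Subgroup.closure {a, b, c} = (⊤ : Subgroup G) ∧
      a ^ (2 * g + 2) = 1 ∧ b ^ 2 = 1 ∧ c ^ 2 = 1 ∧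
      a * b = b * a ∧ b * c = c * b ∧ c * a * c * a * b = 1 ∧
      orderOf a = 2 * g + 2 :=
  accola_maclachlan_group_exists_general g
end

section
/- Let ζ = exp(2πi/5), let J_{X₄} = ℂ⁴/Λ be the complex torus with period matrix Π = (I₄ Z) where Z is the explicit symmetric 4×4 matrix with entries in ℚ(ζ) given by: row 1 = (−2ζ³ + ζ² − ζ − 1/2, −ζ³ − ζ² − 2, ζ³ + ζ² + 3/2, ζ³ + ζ² + 3/2); row 2 = (−ζ³ − ζ² − 2, (6/5)ζ³ + (2/5)ζ² + (8/5)ζ + 4/5, −(3/5)ζ³ − (1/5)ζ² − (4/5)ζ − 2/5, −(7/5)ζ³ + (1/5)ζ² − (6/5)ζ − 3/5); row 3 = (ζ³ + ζ² + 3/2, −(3/5)ζ³ − (1/5)ζ² − (4/5)ζ − 2/5, (4/5)ζ³ + (3/5)ζ² + (7/5)ζ + 7/10, (6/5)ζ³ − (3/5)ζ² + (3/5)ζ + 3/10); row 4 = (ζ³ + ζ² + 3/2, −(7/5)ζ³ + (1/5)ζ² − (6/5)ζ − 3/5, (6/5)ζ³ − (3/5)ζ² + (3/5)ζ + 3/10,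 (4/5)ζ³ + (3/5)ζ² + (7/5)ζ + 7/10). Then Z is symmetric and equals its own transpose, and Z satisfies the fixed-point equation ρ_r(a)·Z = Z for the Sp(8,ℤ) action, where ρ_r(a) is the explicit symplectic matrix with rows (0,1,1,1,−1,0,0,0), (1,0,0,0,0,−1,0,0), (0,0,0,0,0,1,−1,0), (0,0,0,0,0,0,1,−1), (1,0,0,0,0,0,0,0), (0,1,1,1,0,0,0,0), (0,0,1,1,0,0,0,0), (0,0,0,1,0,0,0,0), and R·Z := (A + ZC)⁻¹(B + ZD) for R = ((A,B),(C,D)) in 4×4 blocks. -/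
private lemma finmk2 (h : 2 < 4) : (⟨2, h⟩ : Fin 4) = 2 := rfl
private lemma finmk3 (h : 3 < 4) : (⟨3, h⟩ : Fin 4) = 3 := rfl

open Matrix in
set_option maxHeartbeats 1000000 in
theorem riemann_matrix_JX4_symmetric_and_fixed :
    let ζ : ℂ := Complex.exp (2 * Real.pi * Complex.I / 5)
    let Z : Matrix (Fin 4) (Fin 4) ℂ :=
      !![-2 * ζ ^ 3 + ζ ^ 2 - ζ - 1 / 2, -ζ ^ 3 - ζ ^ 2 - 2,
           ζ ^ 3 + ζ ^ 2 + 3 / 2, ζ ^ 3 + ζ ^ 2 + 3 / 2;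
         -ζ ^ 3 - ζ ^ 2 - 2,
           (6 / 5) * ζ ^ 3 + (2 / 5) * ζ ^ 2 + (8 / 5) * ζ + 4 / 5,
           -(3 / 5) * ζ ^ 3 - (1 / 5) * ζ ^ 2 - (4 / 5) * ζ - 2 / 5,
           -(7 / 5) * ζ ^ 3 + (1 / 5) * ζ ^ 2 - (6 / 5) * ζ - 3 / 5;
         ζ ^ 3 + ζ ^ 2 + 3 / 2,
           -(3 / 5) * ζ ^ 3 - (1 / 5) * ζ ^ 2 - (4 / 5) * ζ - 2 / 5,
           (4 / 5) * ζ ^ 3 + (3 / 5) * ζ ^ 2 + (7 / 5) * ζ + 7 / 10,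
           (6 / 5) * ζ ^ 3 - (3 / 5) * ζ ^ 2 + (3 / 5) * ζ + 3 / 10;
         ζ ^ 3 + ζ ^ 2 + 3 / 2,
           -(7 / 5) * ζ ^ 3 + (1 / 5) * ζ ^ 2 - (6 / 5) * ζ - 3 / 5,
           (6 / 5) * ζ ^ 3 - (3 / 5) * ζ ^ 2 + (3 / 5) * ζ + 3 / 10,
           (4 / 5) * ζ ^ 3 + (3 / 5) * ζ ^ 2 + (7 / 5) * ζ + 7 / 10]
    let A : Matrix (Fin 4) (Fin 4) ℂ :=
      !![0, 1, 1, 1; 1, 0, 0, 0; 0, 0, 0, 0; 0, 0, 0, 0]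
    let B : Matrix (Fin 4) (Fin 4) ℂ :=
      !![-1, 0, 0, 0; 0, -1, 0, 0; 0, 1, -1, 0; 0, 0, 1, -1]
    let C : Matrix (Fin 4) (Fin 4) ℂ :=
      !![1, 0, 0, 0; 0, 1, 1, 1; 0, 0, 1, 1; 0, 0, 0, 1]
    let D : Matrix (Fin 4) (Fin 4) ℂ := 0
    Zᵀ = Z ∧ (A + Z * C)⁻¹ * (B + Z * D) = Z := by
  intro ζ Z A B C D
  have hprim : IsPrimitiveRoot ζ 5 := Complex.isPrimitiveRoot_exp 5 (by norm_num)
  have h5 : ζ ^ 5 = 1 := hprim.pow_eq_one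
  have hne : ζ - 1 ≠ 0 := sub_ne_zero.mpr (hprim.ne_one (by norm_num))
  have hS : ζ ^ 4 + ζ ^ 3 + ζ ^ 2 + ζ + 1 = 0 := by
    have h : (ζ - 1) * (ζ ^ 4 + ζ ^ 3 + ζ ^ 2 + ζ + 1) = 0 := by linear_combination h5
    rcases mul_eq_zero.mp h with h' | h'
    · exact absurd h' hne
    · exact h'
  have hMZ : (A + Z * C) * Z = B := by
    ext i j
    fin_cases i <;> fin_cases j <;>
      simp only [Z, A, B, C, Matrix.add_apply, Matrix.mul_apply, Fin.sum_univ_four,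
        Matrix.cons_val', Matrix.cons_val_zero, Matrix.cons_val_one, Matrix.head_cons,
        Matrix.empty_val', Matrix.cons_val_fin_one, Matrix.of_apply, Fin.isValue,
        Matrix.head_fin_const, Matrix.cons_val_two, Matrix.cons_val_three, Matrix.tail_cons, Fin.mk_zero, Fin.mk_one, finmk2, finmk3]
    · linear_combination ((7:ℂ) + (-6:ℂ)*ζ + (6:ℂ)*ζ^2) * hS
    · linear_combination ((-6/5:ℂ) + (-6/5:ℂ)*ζ + (-3/5:ℂ)*ζ^2) * hS
    · linear_combination ((3/5:ℂ) + (3/5:ℂ)*ζ + (-1/5:ℂ)*ζ^2) * hS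
    · linear_combination ((7/5:ℂ) + (7/5:ℂ)*ζ + (1/5:ℂ)*ζ^2) * hS
    · linear_combination ((-4/5:ℂ) + (-4/5:ℂ)*ζ + (3/5:ℂ)*ζ^2) * hS
    · linear_combination ((18/5:ℂ) + (-6/5:ℂ)*ζ + (16/5:ℂ)*ζ^2) * hS
    · linear_combination ((-8/5:ℂ) + (6/5:ℂ)*ζ + (-11/5:ℂ)*ζ^2) * hS
    · linear_combination ((-2:ℂ) + (-13/5:ℂ)*ζ^2) * hS
    · linear_combination ((7/5:ℂ) + (7/5:ℂ)*ζ + (1/5:ℂ)*ζ^2) * hS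
    · linear_combination ((-24/5:ℂ) + (8/5:ℂ)*ζ + (-19/5:ℂ)*ζ^2) * hS
    · linear_combination ((19/5:ℂ) + (-8/5:ℂ)*ζ + (16/5:ℂ)*ζ^2) * hS
    · linear_combination ((3:ℂ) + (16/5:ℂ)*ζ^2) * hS
    · linear_combination ((3/5:ℂ) + (3/5:ℂ)*ζ + (-1/5:ℂ)*ζ^2) * hS
    · linear_combination ((-18/5:ℂ) + (6/5:ℂ)*ζ + (-17/5:ℂ)*ζ^2) * hS
    · linear_combination ((7/5:ℂ) + (-4/5:ℂ)*ζ + (12/5:ℂ)*ζ^2) * hS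
    · linear_combination ((19/5:ℂ) + (-8/5:ℂ)*ζ + (16/5:ℂ)*ζ^2) * hS
  have hdetB : B.det = 1 := by
    simp [B, Matrix.det_succ_row_zero, Fin.sum_univ_succ]
  have hdet : (A + Z * C).det ≠ 0 := by
    intro h
    have h2 : ((A + Z * C) * Z).det = 0 := by rw [Matrix.det_mul, h, zero_mul]
    rw [hMZ, hdetB] at h2
    exact one_ne_zero h2
  constructor
  · ext i j
    fin_cases i <;> fin_cases j <;>
      simp only [Z, Matrix.transpose_apply, Matrix.cons_val', Matrix.cons_val_zero,
        Matrix.cons_val_one, Matrix.head_cons, Matrix.empty_val', Matrix.cons_val_fin_one,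
        Matrix.of_apply, Fin.isValue, Matrix.head_fin_const, Matrix.cons_val_two,
        Matrix.cons_val_three, Matrix.tail_cons, Fin.mk_zero, Fin.mk_one, finmk2, finmk3]
  · have hD : Z * D = 0 := by simp [D]
    rw [hD, add_zero, ← hMZ, ← Matrix.mul_assoc,
      Matrix.nonsing_inv_mul _ (isUnit_iff_ne_zero.mpr hdet), Matrix.one_mul]
end
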